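/- arXiv:2605.28746 — 4 statements merged into one kernel-verified Lean document; each statement's English description precedes it below -/
import Mathlib

section
/- With utopian point (0,0), reference point r = (1,1), and singleton set A_c = {(1,c)} for 0 < c < 1, the dominated region Dom_r(A_c) = [1,1] × [c,1] (the set of points y with 1 ≤ y₁ ≤ 1 and c ≤ y₂ ≤ 1) has two-dimensional Lebesgue measure zero, yet the exact integral R₂ improvement I_{R₂}(A_c; r) = ∫₀¹ (g_λ(r) − g_λ((1,c)))₊ dλ is strictly positive. -/
open MeasureTheory

/-- Weighted Tchebycheff scalarization with utopian point `(0,0)` in two objectives. -/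
noncomputable def tcheb (l : ℝ) (y : ℝ × ℝ) : ℝ := max (l * y.1) ((1 - l) * y.2)

theorem zero_volume_but_positive_R2_improvement (c : ℝ) (hc0 : 0 < c) (hc1 : c < 1) :
    volume (Set.Icc ((1 : ℝ), c) ((1 : ℝ), (1 : ℝ))) = 0 ∧
    0 < ∫ l in (0 : ℝ)..1, max (tcheb l (1, 1) - tcheb l (1, c)) 0 := by
  constructor
  · rw [← Set.Icc_prod_Icc, Measure.volume_eq_prod, Measure.prod_prod, Real.volume_Icc]
    simp
  · set f : ℝ → ℝ := fun l => max (tcheb l (1, 1) - tcheb l (1, c)) 0 with hf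
    have hcont : Continuous f := by
      unfold f
      unfold tcheb
      continuity
    have hnn : ∀ l, 0 ≤ f l := fun l => le_max_right _ _
    have h1 : 0 < ∫ l in (0:ℝ)..(1/2 : ℝ), f l := by
      apply intervalIntegral.intervalIntegral_pos_of_pos_on
        (hcont.intervalIntegrable _ _)
      · intro x hx
        obtain ⟨hx0, hx2⟩ := hx
        have h1x : 0 < 1 - x := by linarith
        have hmax1 : max (x * 1) ((1 - x) * 1) = 1 - x := by
          rw [max_eq_right] <;> nlinarith
        have hmax2 : max (x * 1) ((1 - x) * c) < 1 - x := by
          apply max_lt <;> nlinarith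
        unfold f
        unfold tcheb
        simp only [hmax1]
        apply lt_max_of_lt_left
        linarith
      · norm_num
    have h2 : 0 ≤ ∫ l in (1/2 : ℝ)..(1:ℝ), f l :=
      intervalIntegral.integral_nonneg (by norm_num) (fun x _ => hnn x)
    have hsplit : (∫ l in (0:ℝ)..(1/2:ℝ), f l) + ∫ l in (1/2:ℝ)..(1:ℝ), f l
        = ∫ l in (0:ℝ)..(1:ℝ), f l :=
      intervalIntegral.integral_add_adjacent_intervals
        (hcont.intervalIntegrable _ _) (hcont.intervalIntegrable _ _)
    linarith [hsplit]
end

section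
/- There is no Lebesgue-integrable nonnegative density K on the box [0,1]² such that, for every finite approximation set A contained in [0,1]², the weighted hypervolume ∫_{Dom_r(A)} K(y) dy equals the exact integral R₂ improvement ∫₀¹ (h_r(λ) − h_A(λ))₊ dλ, where r = (1,1) and z⁺ = (0,0). Specifically, for A = {(1,c)} with 0 < c < 1, the weighted hypervolume is zero while the R₂ improvement is positive. -/
/-!
A point `(1, c)` on the boundary `y₁ = 1` of the box dominates only the segment `{1} × [c, 1]`,
a Lebesgue null set, so every weighted hypervolume of `{(1, c)}` vanishes. Its R2 improvement
does not: for `λ < 1/2` the second objective is the active one at `r = (1, 1)`, and there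
`(1, c)` with `c < 1` strictly lowers the Tchebycheff value.
-/

open MeasureTheory

/-- Scalarization envelope of a finite nonempty set. -/
noncomputable def env (A : Finset (ℝ × ℝ)) (hA : A.Nonempty) (l : ℝ) : ℝ :=
  A.inf' hA (fun a => tcheb l a)

/-- Dominated region of a finite set bounded by the reference point `(1,1)`. -/
def dom (A : Finset (ℝ × ℝ)) : Set (ℝ × ℝ) := ⋃ a ∈ A, Set.Icc a (1, 1)

open Set

theorem continuous_tcheb_left (y : ℝ × ℝ) : Continuous fun l => tcheb l y := by
  unfold tcheb
  fun_prop

theorem env_singleton (a : ℝ × ℝ) (hA : ({a} : Finset (ℝ × ℝ)).Nonempty) (l : ℝ) :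
    env {a} hA l = tcheb l a :=
  Finset.inf'_singleton _

theorem dom_singleton (a : ℝ × ℝ) : dom {a} = Icc a (1, 1) := by
  simp [dom]

theorem volume_Icc_eq_zero_of_fst_eq (x b d : ℝ) :
    volume (Icc (x, b) (x, d) : Set (ℝ × ℝ)) = 0 := by
  rw [Icc_prod_eq, Measure.volume_eq_prod, Measure.prod_prod]
  simp

theorem setIntegral_dom_singleton_of_fst_eq_one (K : ℝ × ℝ → ℝ) (c : ℝ) :
    ∫ y in dom {(1, c)}, K y = 0 := by
  rw [dom_singleton]
  exact setIntegral_measure_zero K (volume_Icc_eq_zero_of_fst_eq 1 c 1)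

theorem tcheb_fst_one_lt_tcheb_one_one {c l : ℝ} (hc : c < 1) (hl : l < 1 / 2) :
    tcheb l (1, c) < tcheb l (1, 1) := by
  have hactive : tcheb l (1, 1) = 1 - l := by
    simp only [tcheb]
    rw [max_eq_right] <;> linarith
  rw [hactive]
  exact max_lt (by simpa using (by linarith : l < 1 - l)) (by nlinarith)

theorem integral_improvement_singleton_fst_one_pos {c : ℝ} (hc : c < 1) :
    0 < ∫ l in (0 : ℝ)..1, max (tcheb l (1, 1) - tcheb l (1, c)) 0 := by
  set f := fun l : ℝ => max (tcheb l (1, 1) - tcheb l (1, c)) 0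
  have hf : Continuous f :=
    ((continuous_tcheb_left _).sub (continuous_tcheb_left _)).max continuous_const
  have hlow : 0 < ∫ l in (0 : ℝ)..1 / 2, f l := by
    refine intervalIntegral.intervalIntegral_pos_of_pos_on (hf.intervalIntegrable _ _)
      (fun l hl => ?_) (by norm_num)
    exact lt_max_of_lt_left (sub_pos.2 (tcheb_fst_one_lt_tcheb_one_one hc hl.2))
  have hhigh : 0 ≤ ∫ l in (1 / 2 : ℝ)..1, f l :=
    intervalIntegral.integral_nonneg (by norm_num) fun _ _ => le_max_right _ _
  rw [← intervalIntegral.integral_add_adjacent_intervals (hf.intervalIntegrable 0 (1 / 2))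
    (hf.intervalIntegrable _ 1)]
  exact add_pos_of_pos_of_nonneg hlow hhigh

theorem no_objective_space_weighted_HV_representation :
    ¬ ∃ K : ℝ × ℝ → ℝ,
      IntegrableOn K (Set.Icc ((0 : ℝ), (0 : ℝ)) (1, 1)) ∧
      (∀ y, 0 ≤ K y) ∧
      ∀ (A : Finset (ℝ × ℝ)) (hA : A.Nonempty),
        (A : Set (ℝ × ℝ)) ⊆ Set.Icc ((0 : ℝ), (0 : ℝ)) (1, 1) →
        ∫ y in dom A, K y =
          ∫ l in (0 : ℝ)..1, max (tcheb l (1, 1) - env A hA l) 0 := by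
  rintro ⟨K, -, -, hK⟩
  have hbox : (({(1, 1 / 2)} : Finset (ℝ × ℝ)) : Set (ℝ × ℝ)) ⊆ Icc (0, 0) (1, 1) := by
    simp only [Finset.coe_singleton, singleton_subset_iff]
    norm_num [Prod.le_def]
  have hrepr := hK _ (Finset.singleton_nonempty _) hbox
  simp only [env_singleton, setIntegral_dom_singleton_of_fst_eq_one] at hrepr
  exact (integral_improvement_singleton_fst_one_pos (by norm_num)).ne hrepr
end

section
/- (Weighted hypervolume of dominated regions transforms to ordinary hypervolume under desirability maps, m = 2) Let k₁, k₂ : ℝ → ℝ be nonnegative integrable functions on [0,1] with T_j(t) = ∫₀ᵗ k_j(s) ds, and let A ⊂ [0,1]² be finite nonempty with reference point r = (1,1). Then ∫_{Dom_r(A)} k₁(y₁)k₂(y₂) dy = Vol(Dom_{T(r)}(T(A))), where T(y) = (T₁(y₁), T₂(y₂)) and Vol denotes two-dimensional Lebesgue measure. -/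
open MeasureTheory intervalIntegral

/-- Desirability transform with kernel `k` and lower limit `0`. -/
noncomputable def desir (k : ℝ → ℝ) (t : ℝ) : ℝ := ∫ s in (0 : ℝ)..t, k s

/-!
The weighted measure `μ` with density `k₁ y₁ k₂ y₂` gives the box `[a, (1,1)]` the mass
`(T₁ 1 - T₁ a₁) (T₂ 1 - T₂ a₂)` (Fubini and the fundamental theorem of calculus), which is the
Lebesgue measure of the transformed box `[T a, T (1,1)]`. Two such boxes meet in the box of the
coordinatewise maximum of their corners, and the monotone map `T` commutes with that maximum.
Adding the boxes of `A` one at a time, `μ (U ∪ B) = μ U + μ B - μ (U ∩ B)` with `U ∩ B` again a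
union of boxes over `A` shows that the two measures of the union agree.
-/

theorem measure_biUnion_eq_of_map_sup_eq_inter {α X Y : Type*} [SemilatticeSup α]
    [MeasurableSpace X] [MeasurableSpace Y] {μ : Measure X} {ν : Measure Y} {S : Set α}
    (hS : SupClosed S) (A : Finset α) (hAS : (A : Set α) ⊆ S) (F : α → Set X) (G : α → Set Y)
    (hF : ∀ a ∈ S, ∀ b ∈ S, F (a ⊔ b) = F a ∩ F b) (hG : ∀ a ∈ S, ∀ b ∈ S, G (a ⊔ b) = G a ∩ G b)
    (hFm : ∀ a ∈ S, MeasurableSet (F a)) (hGm : ∀ a ∈ S, MeasurableSet (G a))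
    (hFG : ∀ a ∈ S, μ (F a) = ν (G a)) (hFfin : ∀ a ∈ S, μ (F a) ≠ ⊤) :
    μ (⋃ a ∈ A, F a) = ν (⋃ a ∈ A, G a) := by
  classical
  -- `(⋃ a ∈ A, F a) ∩ F b = ⋃ a ∈ A, F (a ⊔ b)`, and `F (· ⊔ b)` satisfies the same hypotheses
  -- as `F`: this is why the induction generalizes over the families.
  induction A using Finset.induction_on generalizing F G with
  | empty => simp
  | insert b A _ ih =>
    have hb : b ∈ S := hAS (Finset.mem_insert_self b A)
    have hA : (A : Set α) ⊆ S := fun a ha => hAS (Finset.mem_insert_of_mem ha)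
    have hsup : ∀ a ∈ S, a ⊔ b ∈ S := fun a ha => hS ha hb
    have hFinter : (⋃ a ∈ A, F a) ∩ F b = ⋃ a ∈ A, F (a ⊔ b) := by
      rw [Set.iUnion₂_inter]
      exact Set.iUnion₂_congr fun a ha => (hF a (hA ha) b hb).symm
    have hGinter : (⋃ a ∈ A, G a) ∩ G b = ⋃ a ∈ A, G (a ⊔ b) := by
      rw [Set.iUnion₂_inter]
      exact Set.iUnion₂_congr fun a ha => (hG a (hA ha) b hb).symm
    have hinter : μ ((⋃ a ∈ A, F a) ∩ F b) = ν ((⋃ a ∈ A, G a) ∩ G b) := by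
      rw [hFinter, hGinter]
      exact ih hA _ _
        (fun a ha c hc => by rw [← hF _ (hsup a ha) _ (hsup c hc), sup_sup_distrib_right])
        (fun a ha c hc => by rw [← hG _ (hsup a ha) _ (hsup c hc), sup_sup_distrib_right])
        (fun a ha => hFm _ (hsup a ha)) (fun a ha => hGm _ (hsup a ha))
        (fun a ha => hFG _ (hsup a ha)) (fun a ha => hFfin _ (hsup a ha))
    have hfin : μ ((⋃ a ∈ A, F a) ∩ F b) ≠ ⊤ :=
      ne_top_of_le_ne_top (hFfin b hb) (measure_mono Set.inter_subset_right)
    simp only [Finset.set_biUnion_insert, Set.union_comm (F b), Set.union_comm (G b)]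
    refine (ENNReal.add_left_inj hfin).1 ?_
    calc μ ((⋃ a ∈ A, F a) ∪ F b) + μ ((⋃ a ∈ A, F a) ∩ F b)
        = μ (⋃ a ∈ A, F a) + μ (F b) := measure_union_add_inter _ (hFm b hb)
      _ = ν (⋃ a ∈ A, G a) + ν (G b) := by rw [ih hA F G hF hG hFm hGm hFG hFfin, hFG b hb]
      _ = ν ((⋃ a ∈ A, G a) ∪ G b) + ν ((⋃ a ∈ A, G a) ∩ G b) :=
        (measure_union_add_inter _ (hGm b hb)).symm
      _ = ν ((⋃ a ∈ A, G a) ∪ G b) + μ ((⋃ a ∈ A, F a) ∩ F b) := by rw [hinter]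

section Desirability

variable {k : ℝ → ℝ}

lemma desir_sub_desir (hint : IntegrableOn k (Set.Icc 0 1)) {x y : ℝ}
    (hx : x ∈ Set.Icc (0 : ℝ) 1) (hy : y ∈ Set.Icc (0 : ℝ) 1) :
    desir k y - desir k x = ∫ s in x..y, k s := by
  have hI : ∀ z ∈ Set.Icc (0 : ℝ) 1, IntervalIntegrable k volume 0 z := fun z hz =>
    (hint.mono_set (Set.uIcc_subset_Icc ⟨le_rfl, zero_le_one⟩ hz)).intervalIntegrable
  exact integral_interval_sub_left (hI y hy) (hI x hx)

lemma monotoneOn_desir (hk : ∀ t, 0 ≤ k t) (hint : IntegrableOn k (Set.Icc 0 1)) :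
    MonotoneOn (desir k) (Set.Icc 0 1) := fun _ hx _ hy hxy =>
  sub_nonneg.1 <| desir_sub_desir hint hx hy ▸ integral_nonneg hxy fun t _ => hk t

lemma lintegral_Icc_one_eq_volume_Icc_desir (hk : ∀ t, 0 ≤ k t)
    (hint : IntegrableOn k (Set.Icc 0 1)) {p : ℝ} (hp : p ∈ Set.Icc (0 : ℝ) 1) :
    ∫⁻ t in Set.Icc p 1, ENNReal.ofReal (k t) = volume (Set.Icc (desir k p) (desir k 1)) := by
  have hint' : IntegrableOn k (Set.Icc p 1) := hint.mono_set (Set.Icc_subset_Icc_left hp.1)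
  rw [← ofReal_integral_eq_lintegral_ofReal hint' (ae_of_all _ fun t => hk t), Real.volume_Icc,
    integral_Icc_eq_integral_Ioc, ← integral_of_le hp.2,
    desir_sub_desir hint hp ⟨zero_le_one, le_rfl⟩]

end Desirability

lemma Prod.map_sup_of_monotoneOn {α β γ δ : Type*} [LinearOrder α] [LinearOrder β]
    [SemilatticeSup γ] [SemilatticeSup δ] {f : α → γ} {g : β → δ} {s : Set α} {t : Set β}
    (hf : MonotoneOn f s) (hg : MonotoneOn g t) {a b : α × β} (ha : a ∈ s ×ˢ t)
    (hb : b ∈ s ×ˢ t) : Prod.map f g (a ⊔ b) = Prod.map f g a ⊔ Prod.map f g b :=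
  Prod.ext (hf.map_sup ha.1 hb.1) (hg.map_sup ha.2 hb.2)

lemma setIntegral_eq_toReal_withDensity_ofReal {X : Type*} [MeasurableSpace X] {μ : Measure X}
    {f : X → ℝ} {s : Set X} (hs : MeasurableSet s) (hf : 0 ≤ f)
    (hfm : AEStronglyMeasurable f (μ.restrict s)) :
    ∫ x in s, f x ∂μ = (μ.withDensity (fun x => ENNReal.ofReal (f x)) s).toReal := by
  rw [withDensity_apply _ hs, integral_eq_lintegral_of_nonneg_ae (ae_of_all _ hf) hfm]

lemma withDensity_Icc_one_eq_volume_Icc_desir {k₁ k₂ : ℝ → ℝ} (hk₁ : ∀ t, 0 ≤ k₁ t)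
    (hk₂ : ∀ t, 0 ≤ k₂ t) (hint₁ : IntegrableOn k₁ (Set.Icc 0 1))
    (hint₂ : IntegrableOn k₂ (Set.Icc 0 1)) {a : ℝ × ℝ}
    (ha : a ∈ Set.Icc (0 : ℝ) 1 ×ˢ Set.Icc (0 : ℝ) 1) :
    volume.withDensity (fun y => ENNReal.ofReal (k₁ y.1 * k₂ y.2)) (Set.Icc a (1, 1)) =
      volume (Set.Icc (desir k₁ a.1, desir k₂ a.2) (desir k₁ 1, desir k₂ 1)) := by
  have hmeas₁ : AEMeasurable (fun t => ENNReal.ofReal (k₁ t)) (volume.restrict (Set.Icc a.1 1)) :=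
    (hint₁.mono_set (Set.Icc_subset_Icc_left ha.1.1)).aemeasurable.ennreal_ofReal
  have hmeas₂ : AEMeasurable (fun t => ENNReal.ofReal (k₂ t)) (volume.restrict (Set.Icc a.2 1)) :=
    (hint₂.mono_set (Set.Icc_subset_Icc_left ha.2.1)).aemeasurable.ennreal_ofReal
  simp_rw [withDensity_apply _ measurableSet_Icc, Set.Icc_prod_eq, Measure.volume_eq_prod,
    ← Measure.prod_restrict, ENNReal.ofReal_mul (hk₁ _), lintegral_prod_mul hmeas₁ hmeas₂,
    Measure.prod_prod, lintegral_Icc_one_eq_volume_Icc_desir hk₁ hint₁ ha.1,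
    lintegral_Icc_one_eq_volume_Icc_desir hk₂ hint₂ ha.2]

theorem weighted_HV_eq_ordinary_HV_in_desirability_coordinates_general
    (k₁ k₂ : ℝ → ℝ) (hk₁ : ∀ t, 0 ≤ k₁ t) (hk₂ : ∀ t, 0 ≤ k₂ t)
    (hint₁ : IntegrableOn k₁ (Set.Icc (0 : ℝ) 1))
    (hint₂ : IntegrableOn k₂ (Set.Icc (0 : ℝ) 1))
    (A : Finset (ℝ × ℝ))
    (hAsub : (A : Set (ℝ × ℝ)) ⊆ Set.Icc ((0 : ℝ), (0 : ℝ)) (1, 1)) :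
    ∫ y in dom A, k₁ y.1 * k₂ y.2 =
      (volume (⋃ a ∈ A,
        Set.Icc (desir k₁ a.1, desir k₂ a.2) (desir k₁ 1, desir k₂ 1))).toReal := by
  set S := Set.Icc (0 : ℝ) 1 ×ˢ Set.Icc (0 : ℝ) 1
  have hAS : (A : Set (ℝ × ℝ)) ⊆ S := hAsub.trans (Set.Icc_prod_eq _ _).subset
  have hdom : dom A ⊆ S := Set.iUnion₂_subset fun a ha =>
    (Set.Icc_prod_eq a (1, 1)).subset.trans <|
      Set.prod_mono (Set.Icc_subset_Icc_left (hAS ha).1.1) (Set.Icc_subset_Icc_left (hAS ha).2.1)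
  have hdom_meas : MeasurableSet (dom A) := A.measurableSet_biUnion fun _ _ => measurableSet_Icc
  have hint : IntegrableOn (fun y : ℝ × ℝ => k₁ y.1 * k₂ y.2) S := by
    rw [IntegrableOn, Measure.volume_eq_prod, ← Measure.prod_restrict]
    exact hint₁.mul_prod hint₂
  have hbox := fun a (ha : a ∈ S) =>
    withDensity_Icc_one_eq_volume_Icc_desir hk₁ hk₂ hint₁ hint₂ ha
  rw [setIntegral_eq_toReal_withDensity_ofReal hdom_meas (fun y => mul_nonneg (hk₁ _) (hk₂ _))
    (hint.mono_set hdom).aestronglyMeasurable]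
  congr 1
  refine measure_biUnion_eq_of_map_sup_eq_inter
    ((LinearOrder.supClosed _).prod (LinearOrder.supClosed _)) A hAS (Set.Icc · (1, 1)) _
    (fun a _ b _ => by rw [Set.Icc_inter_Icc, inf_idem])
    (fun a ha b hb => ?_) (fun _ _ => measurableSet_Icc) (fun _ _ => measurableSet_Icc) hbox
    (fun a ha => hbox a ha ▸ measure_Icc_lt_top.ne)
  rw [Set.Icc_inter_Icc, inf_idem]
  exact congrArg (Set.Icc · _) (Prod.map_sup_of_monotoneOn (monotoneOn_desir hk₁ hint₁)
    (monotoneOn_desir hk₂ hint₂) ha hb)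

theorem weighted_HV_eq_ordinary_HV_in_desirability_coordinates
    (k₁ k₂ : ℝ → ℝ) (hk₁ : ∀ t, 0 ≤ k₁ t) (hk₂ : ∀ t, 0 ≤ k₂ t)
    (hint₁ : IntegrableOn k₁ (Set.Icc (0 : ℝ) 1))
    (hint₂ : IntegrableOn k₂ (Set.Icc (0 : ℝ) 1))
    (A : Finset (ℝ × ℝ)) (hA : A.Nonempty)
    (hAsub : (A : Set (ℝ × ℝ)) ⊆ Set.Icc ((0 : ℝ), (0 : ℝ)) (1, 1)) :
    ∫ y in dom A, k₁ y.1 * k₂ y.2 =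
      (volume (⋃ a ∈ A,
        Set.Icc (desir k₁ a.1, desir k₂ a.2) (desir k₁ 1, desir k₂ 1))).toReal :=
  weighted_HV_eq_ordinary_HV_in_desirability_coordinates_general k₁ k₂ hk₁ hk₂ hint₁ hint₂ A hAsub
end

section
/- (No bijection from reduced magnitude to exact R₂, explicit counterexample) In two objectives with z⁺ = (0,0), r = (1,1), and uniform weights: the set A = {(0,1)} has reduced magnitude 1/2 and exact R₂ improvement 1/4, while the set B = {(s,s)} with s = 3 − √6 has reduced magnitude p + p²/4 = 1/2 where p = 1 − s = √6 − 2, but exact R₂ improvement (3/4)(√6 − 2) ≠ 1/4. -/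
/-- Reduced magnitude of an axis-aligned rectangle with side lengths `p₁`, `p₂`. -/
noncomputable def redMag (p₁ p₂ : ℝ) : ℝ := (p₁ + p₂) / 2 + p₁ * p₂ / 4

lemma split_int (f : ℝ → ℝ) (hf : Continuous f) :
    ∫ l in (0:ℝ)..1, f l = (∫ l in (0:ℝ)..(1/2:ℝ), f l) + ∫ l in (1/2:ℝ)..1, f l :=
  (intervalIntegral.integral_add_adjacent_intervals
    (hf.intervalIntegrable _ _) (hf.intervalIntegrable _ _)).symm

lemma sqrt6_lt : Real.sqrt 6 < 3 := by
  nlinarith [Real.sq_sqrt (by norm_num : (6:ℝ) ≥ 0), Real.sqrt_nonneg 6]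

lemma sqrt6_gt : 2 < Real.sqrt 6 := by
  nlinarith [Real.sq_sqrt (by norm_num : (6:ℝ) ≥ 0), Real.sqrt_nonneg 6]

theorem no_magnitude_bijection_counterexample :
    redMag 1 0 = 1 / 2 ∧
    (∫ l in (0 : ℝ)..1, max (tcheb l (1, 1) - tcheb l (0, 1)) 0) = 1 / 4 ∧
    (let s : ℝ := 3 - Real.sqrt 6
     let p : ℝ := 1 - s
     p = Real.sqrt 6 - 2 ∧
     redMag p p = 1 / 2 ∧
     (∫ l in (0 : ℝ)..1, max (tcheb l (1, 1) - tcheb l (s, s)) 0) =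
       3 / 4 * (Real.sqrt 6 - 2) ∧
     3 / 4 * (Real.sqrt 6 - 2) ≠ 1 / 4) := by
  have hs6 : Real.sqrt 6 ^ 2 = 6 := Real.sq_sqrt (by norm_num)
  refine ⟨by norm_num [redMag], ?_, ?_, ?_, ?_, ?_⟩
  · have hc : Continuous fun l : ℝ => max (tcheb l (1, 1) - tcheb l (0, 1)) 0 := by
      unfold tcheb; fun_prop
    rw [split_int _ hc]
    have h1 : (∫ l in (0:ℝ)..(1/2:ℝ), max (tcheb l (1, 1) - tcheb l (0, 1)) 0)
        = ∫ _ in (0:ℝ)..(1/2:ℝ), (0:ℝ) := by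
      apply intervalIntegral.integral_congr
      intro x hx
      rw [Set.uIcc_of_le (by norm_num)] at hx
      obtain ⟨h0, h1⟩ := hx
      simp only [tcheb, mul_one, mul_zero]
      rw [max_eq_right (by linarith : x ≤ 1 - x),
        max_eq_right (by linarith : (0:ℝ) ≤ 1 - x)]
      simp
    have h2 : (∫ l in (1/2:ℝ)..1, max (tcheb l (1, 1) - tcheb l (0, 1)) 0)
        = ∫ l in (1/2:ℝ)..1, (2*l - 1) := by
      apply intervalIntegral.integral_congr
      intro x hx
      rw [Set.uIcc_of_le (by norm_num)] at hx
      obtain ⟨h0, h1⟩ := hx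
      simp only [tcheb, mul_one, mul_zero]
      rw [max_eq_left (by linarith : 1 - x ≤ x),
        max_eq_right (by linarith : (0:ℝ) ≤ 1 - x),
        max_eq_left (by linarith : (0:ℝ) ≤ x - (1 - x))]
      ring
    rw [h1, h2]
    rw [intervalIntegral.integral_sub (Continuous.intervalIntegrable (by continuity) _ _)
        intervalIntegrable_const,
      intervalIntegral.integral_const_mul, integral_id]
    simp only [intervalIntegral.integral_const, smul_eq_mul]
    norm_num
  · ring
  · simp only [redMag]; nlinarith
  · have hs1 : (3 : ℝ) - Real.sqrt 6 ≥ 0 := by nlinarith [sqrt6_lt]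
    have hs2 : (3 : ℝ) - Real.sqrt 6 ≤ 1 := by nlinarith [sqrt6_gt]
    set s : ℝ := 3 - Real.sqrt 6 with hs
    have hs1' : 0 ≤ s := hs1
    have hs2' : s ≤ 1 := hs2
    have hc : Continuous fun l : ℝ => max (tcheb l (1, 1) - tcheb l (s, s)) 0 := by
      unfold tcheb; fun_prop
    rw [split_int _ hc]
    have h1 : (∫ l in (0:ℝ)..(1/2:ℝ), max (tcheb l (1, 1) - tcheb l (s, s)) 0)
        = ∫ l in (0:ℝ)..(1/2:ℝ), ((1-s) * (1 - l)) := by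
      apply intervalIntegral.integral_congr
      intro x hx
      rw [Set.uIcc_of_le (by norm_num)] at hx
      obtain ⟨h0, h1⟩ := hx
      simp only [tcheb, mul_one]
      rw [max_eq_right (by linarith : x ≤ 1 - x),
        max_eq_right (by nlinarith : x * s ≤ (1 - x) * s),
        max_eq_left (by nlinarith : (0:ℝ) ≤ 1 - x - (1 - x) * s)]
      ring
    have h2 : (∫ l in (1/2:ℝ)..1, max (tcheb l (1, 1) - tcheb l (s, s)) 0)
        = ∫ l in (1/2:ℝ)..1, ((1-s) * l) := by
      apply intervalIntegral.integral_congr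
      intro x hx
      rw [Set.uIcc_of_le (by norm_num)] at hx
      obtain ⟨h0, h1⟩ := hx
      simp only [tcheb, mul_one]
      rw [max_eq_left (by linarith : 1 - x ≤ x),
        max_eq_left (by nlinarith : (1 - x) * s ≤ x * s),
        max_eq_left (by nlinarith : (0:ℝ) ≤ x - x * s)]
      ring
    rw [h1, h2, intervalIntegral.integral_const_mul, intervalIntegral.integral_const_mul]
    rw [intervalIntegral.integral_sub intervalIntegrable_const
        (Continuous.intervalIntegrable (by continuity) _ _),
      integral_id, integral_id]
    simp only [intervalIntegral.integral_const, smul_eq_mul, hs]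
    ring
  · intro h
    nlinarith [hs6, sqrt6_gt]
end
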